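/- arXiv:1806.07581 — 2 statements merged into one kernel-verified Lean document; each statement's English description precedes it below -/
import Mathlib

section
/- Suppose the travel-time constraints (3) hold, i.e., for all distinct vertices m, n ∈ V, all times t with 1 ≤ t ≤ T, and all lags τ with 0 ≤ τ ≤ tr(m,n) and t + τ ≤ T, it is not the case that both a(m,t) = 1 and a(n,t+τ) = 1. Then the scheduling plan a admits a corresponding feasible path in the complete graph on V: the set of visit events {(t,m) : a(m,t) = 1} contains at most one vertex per time period, and when its elements are listed in strictly increasing order of time as (t_1,v_1), (t_2,v_2), …, (t_p,v_p), every pair of consecutive events with v_i ≠ v_{i+1} satisfies t_{i+1} − t_i > tr(v_i, v_{i+1}), so the crew has strictly more than the required travel time to move between consecutive visited vertices (Proposition 1). -/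
theorem crew_schedule_admits_feasible_path_general
    {V : Type*} (T : ℕ) (a : V → ℕ → ℕ) (tr : V → V → ℕ)
    (h3 : ∀ m n : V, m ≠ n → ∀ t τ : ℕ, 1 ≤ t → t ≤ T →
      τ ≤ tr m n → t + τ ≤ T → ¬ (a m t = 1 ∧ a n (t + τ) = 1)) :
    (∀ t : ℕ, 1 ≤ t → t ≤ T → ∀ m n : V, a m t = 1 → a n t = 1 → m = n) ∧
    (∀ t t' : ℕ, ∀ m n : V, 1 ≤ t → t ≤ T → t' ≤ T → t < t' → m ≠ n →
      a m t = 1 → a n t' = 1 →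
      (∀ s : ℕ, t < s → s < t' → ∀ v : V, a v s ≠ 1) →
      tr m n < t' - t) := by
  refine ⟨fun t ht1 htT m n hm hn => ?_, fun t t' m n ht1 htT ht'T htt' hmn hm hn _ => ?_⟩
  · by_contra hmn
    exact h3 m n hmn t 0 ht1 htT (Nat.zero_le _) htT ⟨hm, hn⟩
  · by_contra! hle
    exact h3 m n hmn t (t' - t) ht1 htT hle (by omega) ⟨hm, by rwa [Nat.add_sub_cancel' htt'.le]⟩

/-- **Proposition 1.** If the scheduling plan `a` of a repair crew satisfies the
travel-time constraints (3) (for all distinct vertices `m, n`, times `t` with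
`1 ≤ t ≤ T`, and lags `τ ≤ tr m n` with `t + τ ≤ T`, not both `a m t = 1` and
`a n (t + τ) = 1`), then the plan admits a corresponding feasible path:
at most one vertex is visited in each time period, and between any two
consecutive visit events `(t, m)` and `(t', n)` (no visit strictly in between)
at distinct vertices, strictly more than the travel time `tr m n` elapses. -/
theorem crew_schedule_admits_feasible_path
    {V : Type*} [Fintype V] (T : ℕ) (a : V → ℕ → ℕ) (tr : V → V → ℕ)
    (ha : ∀ m t, a m t = 0 ∨ a m t = 1)
    (h3 : ∀ m n : V, m ≠ n → ∀ t τ : ℕ, 1 ≤ t → t ≤ T →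
      τ ≤ tr m n → t + τ ≤ T → ¬ (a m t = 1 ∧ a n (t + τ) = 1)) :
    (∀ t : ℕ, 1 ≤ t → t ≤ T → ∀ m n : V, a m t = 1 → a n t = 1 → m = n) ∧
    (∀ t t' : ℕ, ∀ m n : V, 1 ≤ t → t ≤ T → t' ≤ T → t < t' → m ≠ n →
      a m t = 1 → a n t' = 1 →
      (∀ s : ℕ, t < s → s < t' → ∀ v : V, a v s ≠ 1) →
      tr m n < t' - t) :=
  crew_schedule_admits_feasible_path_general T a tr h3
end

section
/- Suppose the scheduling plan a satisfies the single-visit constraints (1): for every time t with 1 ≤ t ≤ T, ∑_{m ∈ V} a(m,t) ≤ 1. Then the following two families of constraints are equivalent. Family (3): for all distinct m, n ∈ V, all t with 1 ≤ t ≤ T, and all τ with 0 ≤ τ ≤ tr(m,n) and t + τ ≤ T, a(n, t+τ) + a(m, t) ≤ 1. Family (4): for all distinct m, n ∈ V and all t with 1 ≤ t ≤ T, ∑_{τ = t+1}^{min(t + tr(m,n), T)} a(n, τ) ≤ (1 − a(m,t)) · min(tr(m,n), T − t). -/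
/-!
Constraint (3) at `τ = 0` already follows from the single-visit constraints, and for
`τ ≥ 1` it says that `a n` vanishes on the window `[t + 1, min (t + tr m n) T]` whenever
`a m t = 1`. Since `a n` is `0`/`1`-valued, this is the same as the sum of `a n` over the window
being at most `(1 - a m t)` times the window length `min (tr m n) (T - t)`.
-/

open Finset

theorem forall_add_le_one_iff_sum_le_mul_card {ι : Type*} {s : Finset ι} {f : ι → ℕ}
    {x : ℕ} (hf : ∀ i ∈ s, f i ≤ 1) (hx : x = 0 ∨ x = 1) :
    (∀ i ∈ s, f i + x ≤ 1) ↔ ∑ i ∈ s, f i ≤ (1 - x) * #s := by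
  rcases hx with rfl | rfl
  · simp only [add_zero, Nat.sub_zero, one_mul]
    exact iff_of_true hf (by simpa using s.sum_le_card_nsmul f 1 hf)
  · simp [Finset.sum_eq_zero_iff]

theorem card_Icc_succ_min_add (t d T : ℕ) :
    #(Icc (t + 1) (min (t + d) T)) = min d (T - t) := by
  rw [Nat.card_Icc]
  omega

theorem forall_add_le_iff_and_forall_mem_Icc (P : ℕ → Prop) {t d T : ℕ} (ht : t ≤ T) :
    (∀ τ ≤ d, t + τ ≤ T → P (t + τ)) ↔
      P t ∧ ∀ i ∈ Icc (t + 1) (min (t + d) T), P i := by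
  constructor
  · intro h
    refine ⟨h 0 (Nat.zero_le d) (by omega), fun i hi => ?_⟩
    simp only [mem_Icc, le_min_iff] at hi
    simpa [Nat.add_sub_cancel' (by omega : t ≤ i)] using h (i - t) (by omega) (by omega)
  · rintro ⟨h₀, h⟩ τ hτ htτ
    rcases Nat.eq_zero_or_pos τ with rfl | hτ₀
    · exact h₀
    · exact h (t + τ) (by simp only [mem_Icc, le_min_iff]; omega)

theorem add_le_sum_of_ne {V : Type*} [Fintype V] (f : V → ℕ) {m n : V} (hmn : m ≠ n) :
    f n + f m ≤ ∑ v, f v := by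
  classical
  simpa [sum_pair hmn.symm] using
    sum_le_sum_of_subset_of_nonneg (subset_univ {n, m}) fun v _ _ => Nat.zero_le (f v)

theorem travel_time_constraints_equiv_general
    {V : Type*} [Fintype V] (T : ℕ)
    (a : V → ℕ → ℕ) (tr : V → V → ℕ)
    (ha : ∀ m t, a m t = 0 ∨ a m t = 1)
    (h1 : ∀ t : ℕ, 1 ≤ t → t ≤ T → ∑ m : V, a m t ≤ 1) :
    (∀ m n : V, m ≠ n → ∀ t τ : ℕ, 1 ≤ t → t ≤ T →
        τ ≤ tr m n → t + τ ≤ T → a n (t + τ) + a m t ≤ 1) ↔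
    (∀ m n : V, m ≠ n → ∀ t : ℕ, 1 ≤ t → t ≤ T →
        ∑ τ ∈ Finset.Icc (t + 1) (min (t + tr m n) T), a n τ ≤
          (1 - a m t) * min (tr m n) (T - t)) := by
  have window_iff : ∀ m n : V, m ≠ n → ∀ t, 1 ≤ t → t ≤ T →
      ((∀ τ ≤ tr m n, t + τ ≤ T → a n (t + τ) + a m t ≤ 1) ↔
        ∑ τ ∈ Icc (t + 1) (min (t + tr m n) T), a n τ ≤
          (1 - a m t) * min (tr m n) (T - t)) := by
    intro m n hmn t ht₁ htT
    rw [forall_add_le_iff_and_forall_mem_Icc (fun i => a n i + a m t ≤ 1) htT,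
      ← card_Icc_succ_min_add, ← forall_add_le_one_iff_sum_le_mul_card
        (fun i _ => by rcases ha n i with h | h <;> omega) (ha m t)]
    exact and_iff_right ((add_le_sum_of_ne (a · t) hmn).trans (h1 t ht₁ htT))
  exact ⟨fun h m n hmn t ht₁ htT =>
      (window_iff m n hmn t ht₁ htT).1 fun τ => h m n hmn t τ ht₁ htT,
    fun h m n hmn t τ ht₁ htT => (window_iff m n hmn t ht₁ htT).2 (h m n hmn t ht₁ htT) τ⟩

/-- Under the single-visit constraints (1) (`∑_{m ∈ V} a m t ≤ 1` for each
time `t` with `1 ≤ t ≤ T`), the family of travel-time constraints (3) is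
equivalent to the family of aggregated constraints (4). -/
theorem travel_time_constraints_equiv
    {V : Type*} [Fintype V] [DecidableEq V] (T : ℕ)
    (a : V → ℕ → ℕ) (tr : V → V → ℕ)
    (ha : ∀ m t, a m t = 0 ∨ a m t = 1)
    (h1 : ∀ t : ℕ, 1 ≤ t → t ≤ T → ∑ m : V, a m t ≤ 1) :
    (∀ m n : V, m ≠ n → ∀ t τ : ℕ, 1 ≤ t → t ≤ T →
        τ ≤ tr m n → t + τ ≤ T → a n (t + τ) + a m t ≤ 1) ↔
    (∀ m n : V, m ≠ n → ∀ t : ℕ, 1 ≤ t → t ≤ T →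
        ∑ τ ∈ Finset.Icc (t + 1) (min (t + tr m n) T), a n τ ≤
          (1 - a m t) * min (tr m n) (T - t)) :=
  travel_time_constraints_equiv_general T a tr ha h1
end
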